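/- Let R̂ ∈ ℂ^{(N+M)×(N+M)} be Hermitian positive semidefinite with positive definite top-left N×N block R̂_x, and let θ₂ ≥ 1 ≥ θ₁ ≥ 0. Then (i) for every Hermitian R with θ₁R̂ ⪯ R ⪯ θ₂R̂ whose top-left block R_x is positive definite, f1(R) ≤ f1(θ₂R̂) = θ₂ f1(R̂); and (ii) the Wiener beamformer induced by the worst-case matrix θ₂R̂ coincides with the nominal Wiener beamformer: (θ₂R̂_xs)ᴴ (θ₂R̂_x)⁻¹ = R̂_xsᴴ R̂_x⁻¹. Hence the multiplicative-moment distributionally robust beamformer equals the nominal Wiener beamformer. -/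

import Mathlib

/-!
The Schur complement `S / S₁₁ = S₂₂ - S₁₂ᴴ S₁₁⁻¹ S₁₂` is monotone in the Loewner order: for
hermitian `S` with `S₁₁ ≻ 0`, the Schur-complement criterion for positive semidefiniteness says
that `diag(0, X) ⪯ S` exactly when `X ⪯ S / S₁₁`. Hence `S ⪯ T` gives
`diag(0, S / S₁₁) ⪯ S ⪯ T`, i.e. `S / S₁₁ ⪯ T / T₁₁`, and taking traces, `f1` is monotone,
so its maximum over the uncertainty set is attained at the upper end `θ₂R̂`. Both the Schur
complement and the Wiener beamformer `S₁₂ᴴ S₁₁⁻¹` are homogeneous in `S`, of degree one and zero.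
-/

open Matrix
open scoped ComplexOrder

/-- The MMSE functional `f1(R) := Re Tr(R_s − R_xsᴴ R_x⁻¹ R_xs)` of a block matrix
`R = [[R_x, R_xs],[R_xsᴴ, R_s]]`. -/
noncomputable def f1 {N M : ℕ} (R : Matrix (Fin N ⊕ Fin M) (Fin N ⊕ Fin M) ℂ) : ℝ :=
  ((R.toBlocks₂₂ - (R.toBlocks₁₂)ᴴ * (R.toBlocks₁₁)⁻¹ * R.toBlocks₁₂).trace).re

namespace Matrix

variable {m n 𝕜 : Type*} [Fintype m] [DecidableEq m]

-- Unconditional because of the junk value `A⁻¹ = 0` for singular `A`.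
theorem inv_smul₀ [Field 𝕜] (k : 𝕜) (A : Matrix m m 𝕜) : (k • A)⁻¹ = k⁻¹ • A⁻¹ := by
  rcases eq_or_ne k 0 with rfl | hk
  · simp
  by_cases hA : IsUnit A.det
  · exact inv_eq_left_inv (by simp [smul_smul, hk, nonsing_inv_mul _ hA])
  · have hkA : ¬IsUnit (k • A).det := by
      rwa [det_smul, IsUnit.mul_iff, not_and_or, or_iff_right (not_not.2 (hk.isUnit.pow _))]
    rw [nonsing_inv_apply_not_isUnit _ hA, nonsing_inv_apply_not_isUnit _ hkA, smul_zero]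

section RCLike

variable [RCLike 𝕜]

noncomputable def wienerBeamformer (S : Matrix (m ⊕ n) (m ⊕ n) 𝕜) : Matrix n m 𝕜 :=
  S.toBlocks₁₂ᴴ * S.toBlocks₁₁⁻¹

noncomputable def schurCompl (S : Matrix (m ⊕ n) (m ⊕ n) 𝕜) : Matrix n n 𝕜 :=
  S.toBlocks₂₂ - wienerBeamformer S * S.toBlocks₁₂

theorem wienerBeamformer_real_smul {c : ℝ} (hc : c ≠ 0) (S : Matrix (m ⊕ n) (m ⊕ n) 𝕜) :
    wienerBeamformer (c • S) = wienerBeamformer S := by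
  have hc' : (c : 𝕜) ≠ 0 := RCLike.ofReal_ne_zero.2 hc
  have h₁₁ : (c • S).toBlocks₁₁ = (c : 𝕜) • S.toBlocks₁₁ := RCLike.real_smul_eq_coe_smul c _
  have h₁₂ : (c • S).toBlocks₁₂ = (c : 𝕜) • S.toBlocks₁₂ := RCLike.real_smul_eq_coe_smul c _
  rw [wienerBeamformer, wienerBeamformer, h₁₁, h₁₂, inv_smul₀, conjTranspose_smul,
    RCLike.star_def, RCLike.conj_ofReal, Matrix.smul_mul, Matrix.mul_smul, smul_smul,
    mul_inv_cancel₀ hc', one_smul]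

@[simp]
theorem schurCompl_zero : schurCompl (0 : Matrix (m ⊕ n) (m ⊕ n) 𝕜) = 0 := by
  show (0 : Matrix n n 𝕜) - wienerBeamformer 0 * 0 = 0
  simp

theorem schurCompl_real_smul (c : ℝ) (S : Matrix (m ⊕ n) (m ⊕ n) 𝕜) :
    schurCompl (c • S) = c • schurCompl S := by
  rcases eq_or_ne c 0 with rfl | hc
  · simp
  rw [schurCompl, schurCompl, wienerBeamformer_real_smul hc, smul_sub]
  exact congrArg _ (Matrix.mul_smul _ c _)

variable [Fintype n]

theorem posSemidef_sub_fromBlocks_zero_iff {S : Matrix (m ⊕ n) (m ⊕ n) 𝕜} (hS : S.IsHermitian)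
    (hS₁₁ : S.toBlocks₁₁.PosDef) (X : Matrix n n 𝕜) :
    (S - fromBlocks 0 0 0 X).PosSemidef ↔ (schurCompl S - X).PosSemidef := by
  let := hS₁₁.isUnit.invertible
  have hsub : S - fromBlocks 0 0 0 X =
      fromBlocks S.toBlocks₁₁ S.toBlocks₁₂ S.toBlocks₁₂ᴴ (S.toBlocks₂₂ - X) := by
    ext (i | i) (j | j) <;> simp [toBlocks₁₁, toBlocks₁₂, toBlocks₂₂]
    exact (hS.apply _ _).symm
  rw [hsub, PosDef.fromBlocks₁₁ _ _ hS₁₁, schurCompl, wienerBeamformer, sub_right_comm]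

theorem posSemidef_schurCompl_sub_of_posSemidef_sub {S T : Matrix (m ⊕ n) (m ⊕ n) 𝕜}
    (hS : S.IsHermitian) (hS₁₁ : S.toBlocks₁₁.PosDef) (hST : (T - S).PosSemidef) :
    (schurCompl T - schurCompl S).PosSemidef := by
  have hT : T.IsHermitian := by simpa using hST.isHermitian.add hS
  have hT₁₁ : T.toBlocks₁₁.PosDef := by
    convert hS₁₁.add_posSemidef (hST.submatrix Sum.inl) using 1
    ext
    simp [toBlocks₁₁]
  rw [← posSemidef_sub_fromBlocks_zero_iff hT hT₁₁]
  have hS' := (posSemidef_sub_fromBlocks_zero_iff hS hS₁₁ (schurCompl S)).2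
    (by simpa using PosSemidef.zero)
  simpa using hST.add hS'

end RCLike

end Matrix

theorem f1_le_f1 {N M : ℕ} {R T : Matrix (Fin N ⊕ Fin M) (Fin N ⊕ Fin M) ℂ} (hR : R.IsHermitian)
    (hR₁₁ : R.toBlocks₁₁.PosDef) (hRT : (T - R).PosSemidef) : f1 R ≤ f1 T := by
  have := (posSemidef_schurCompl_sub_of_posSemidef_sub hR hR₁₁ hRT).trace_nonneg
  rw [trace_sub, sub_nonneg, Complex.le_def] at this
  exact this.1

theorem f1_real_smul {N M : ℕ} (c : ℝ) (R : Matrix (Fin N ⊕ Fin M) (Fin N ⊕ Fin M) ℂ) :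
    f1 (c • R) = c * f1 R := by
  change (schurCompl (c • R)).trace.re = c * (schurCompl R).trace.re
  rw [schurCompl_real_smul, trace_smul, Complex.smul_re, smul_eq_mul]

theorem multiplicative_moment_worst_case_general {N M : ℕ}
    (Rhat : Matrix (Fin N ⊕ Fin M) (Fin N ⊕ Fin M) ℂ)
    (θ₁ θ₂ : ℝ) (hθ₂ : 1 ≤ θ₂) :
    (∀ R : Matrix (Fin N ⊕ Fin M) (Fin N ⊕ Fin M) ℂ, R.IsHermitian →
        (R - θ₁ • Rhat).PosSemidef → (θ₂ • Rhat - R).PosSemidef →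
        R.toBlocks₁₁.PosDef →
        f1 R ≤ f1 (θ₂ • Rhat))
    ∧ f1 (θ₂ • Rhat) = θ₂ * f1 Rhat
    ∧ ((θ₂ • Rhat).toBlocks₁₂)ᴴ * ((θ₂ • Rhat).toBlocks₁₁)⁻¹
        = (Rhat.toBlocks₁₂)ᴴ * (Rhat.toBlocks₁₁)⁻¹ :=
  ⟨fun _ hR _ hRθ₂ hR₁₁ => f1_le_f1 hR hR₁₁ hRθ₂, f1_real_smul θ₂ Rhat,
    wienerBeamformer_real_smul (by linarith) Rhat⟩

/-- Over the multiplicative moment uncertainty set `θ₁R̂ ⪯ R ⪯ θ₂R̂` with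
`θ₂ ≥ 1 ≥ θ₁ ≥ 0`: (i) the worst case of `f1` is attained at `θ₂R̂` and
`f1(θ₂R̂) = θ₂ f1(R̂)`; (ii) the induced Wiener beamformer coincides with the nominal
one: `(θ₂R̂_xs)ᴴ (θ₂R̂_x)⁻¹ = R̂_xsᴴ R̂_x⁻¹`. -/
theorem multiplicative_moment_worst_case {N M : ℕ}
    (Rhat : Matrix (Fin N ⊕ Fin M) (Fin N ⊕ Fin M) ℂ)
    (hRhat : Rhat.PosSemidef) (hx : Rhat.toBlocks₁₁.PosDef)
    (θ₁ θ₂ : ℝ) (hθ₁0 : 0 ≤ θ₁) (hθ₁1 : θ₁ ≤ 1) (hθ₂ : 1 ≤ θ₂) :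
    (∀ R : Matrix (Fin N ⊕ Fin M) (Fin N ⊕ Fin M) ℂ, R.IsHermitian →
        (R - θ₁ • Rhat).PosSemidef → (θ₂ • Rhat - R).PosSemidef →
        R.toBlocks₁₁.PosDef →
        f1 R ≤ f1 (θ₂ • Rhat))
    ∧ f1 (θ₂ • Rhat) = θ₂ * f1 Rhat
    ∧ ((θ₂ • Rhat).toBlocks₁₂)ᴴ * ((θ₂ • Rhat).toBlocks₁₁)⁻¹
        = (Rhat.toBlocks₁₂)ᴴ * (Rhat.toBlocks₁₁)⁻¹ :=
  multiplicative_moment_worst_case_general Rhat θ₁ θ₂ hθ₂
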